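/- Let n ≥ 2, σ > 0, μ ∈ S↑, and k* be defined as min{m ∈ ℕ : m ≥ (V(μ)² n/(σ² log(en)))^{1/3}} (or 1 if the set is empty). Then there exists ū nondecreasing with at most k* pieces such that (1/n)∑_{i=1}^n (ū_i − μ_i)² ≤ (1/4)·max( (σ² V(μ) log(en)/n)^{2/3}, σ² log(en)/n ). -/

import Mathlib

/-!
Cut `[μ 1, μ n]` into `k*` cells of width `h = V / k*` and round each `μ i` to the midpoint of
its cell. The rounded sequence is nondecreasing, takes at most `k*` values and stays within
`h / 2` of `μ`, so its mean squared error is at most `V² / (4 k*²)`. Finally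
`k* ≥ max(1, (V² n / (σ² log(e n)))^{1/3})` turns `V² / k*²` into the stated maximum.
-/

open Finset

lemma monotoneOn_Icc_of_le_succ {α : Type*} [Preorder α] {f : ℕ → α} {a n : ℕ}
    (hf : ∀ i ∈ Ico a n, f i ≤ f (i + 1)) : MonotoneOn f (Set.Icc a n) :=
  monotoneOn_of_le_succ Set.ordConnected_Icc fun i _ hi hi1 =>
    hf i (by simp only [Set.mem_Icc, Order.succ_eq_add_one] at hi hi1; simp only [mem_Ico]; omega)

lemma card_filter_lt_succ_le {f : ℕ → ℕ} {a n : ℕ} (hf : ∀ i ∈ Ico a n, f i ≤ f (i + 1)) :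
    #{i ∈ Ico a n | f i < f (i + 1)} ≤ f n - f a := by
  rcases lt_or_ge n a with hna | han
  · simp [Ico_eq_empty_of_le hna.le]
  have hsum : (#{i ∈ Ico a n | f i < f (i + 1)} : ℤ) ≤ ∑ i ∈ Ico a n, ((f (i + 1) : ℤ) - f i) := by
    rw [card_filter, Nat.cast_sum]
    gcongr with i hi
    have := hf i hi
    split_ifs <;> push_cast <;> omega
  rw [sum_Ico_sub (fun i => (f i : ℤ)) han] at hsum
  omega

lemma one_div_mul_sum_Icc_le {f : ℕ → ℝ} {n : ℕ} {c : ℝ} (hn : n ≠ 0)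
    (hf : ∀ i ∈ Icc 1 n, f i ≤ c) : 1 / (n : ℝ) * ∑ i ∈ Icc 1 n, f i ≤ c := by
  have hsum := sum_le_card_nsmul _ _ _ hf
  rw [Nat.card_Icc, Nat.add_sub_cancel, nsmul_eq_mul] at hsum
  rw [one_div, inv_mul_le_iff₀ (by positivity)]
  exact hsum

section cellIndex

variable {h t : ℝ} {k : ℕ}

noncomputable def cellIndex (h : ℝ) (k : ℕ) (t : ℝ) : ℕ := min (k - 1) ⌊t / h⌋₊

lemma cellIndex_le : cellIndex h k t ≤ k - 1 := min_le_left _ _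

lemma cellIndex_mono (hh : 0 ≤ h) : Monotone (cellIndex h k) := fun _ _ hst =>
  min_le_min_left _ (Nat.floor_mono (div_le_div_of_nonneg_right hst hh))

lemma cellIndex_mul_le (hh : 0 ≤ h) (ht : 0 ≤ t) : cellIndex h k t * h ≤ t := by
  rcases hh.eq_or_lt with rfl | hpos
  · simpa using ht
  calc (cellIndex h k t : ℝ) * h ≤ ⌊t / h⌋₊ * h := by
        gcongr; exact_mod_cast min_le_right _ _
    _ ≤ t / h * h := by gcongr; exact Nat.floor_le (by positivity)
    _ = t := div_mul_cancel₀ t hpos.ne'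

lemma le_cellIndex_add_one_mul (hh : 0 ≤ h) (ht : t ≤ k * h) :
    t ≤ (cellIndex h k t + 1) * h := by
  rcases hh.eq_or_lt with rfl | hpos
  · simpa using ht
  rcases le_total ⌊t / h⌋₊ (k - 1) with hle | hle
  · rw [cellIndex, min_eq_right hle]
    have := Nat.lt_floor_add_one (t / h)
    rw [div_lt_iff₀ hpos] at this
    exact this.le
  · rw [cellIndex, min_eq_left hle]
    have hk : (k : ℝ) ≤ ((k - 1 : ℕ) : ℝ) + 1 := by exact_mod_cast (by omega : k ≤ k - 1 + 1)
    nlinarith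

lemma sq_cellMid_sub_le (hh : 0 ≤ h) (ht₀ : 0 ≤ t) (ht : t ≤ k * h) :
    (h * (cellIndex h k t + 1 / 2) - t) ^ 2 ≤ h ^ 2 / 4 := by
  have hlo := cellIndex_mul_le (k := k) hh ht₀
  have hhi := le_cellIndex_add_one_mul hh ht
  nlinarith [mul_nonneg (sub_nonneg.2 hlo) (sub_nonneg.2 hhi)]

end cellIndex

theorem exists_monotone_steps_sq_sub_le {μ : ℕ → ℝ} {a n k : ℕ} {h : ℝ} (hh : 0 ≤ h)
    (hμ : ∀ i ∈ Ico a n, μ i ≤ μ (i + 1)) (hrange : μ n - μ a ≤ k * h) :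
    ∃ u : ℕ → ℝ, (∀ i ∈ Ico a n, u i ≤ u (i + 1)) ∧
      #{i ∈ Ico a n | u i < u (i + 1)} ≤ k - 1 ∧
      ∀ i ∈ Icc a n, (u i - μ i) ^ 2 ≤ h ^ 2 / 4 := by
  set b : ℕ → ℕ := fun i => cellIndex h k (μ i - μ a)
  have hb : ∀ i ∈ Ico a n, b i ≤ b (i + 1) := fun i hi =>
    cellIndex_mono hh (sub_le_sub_right (hμ i hi) _)
  set u : ℕ → ℝ := fun i => μ a + h * (b i + 1 / 2)
  have hub : ∀ i j, b i ≤ b j → u i ≤ u j := fun i j hij => by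
    simp only [u]; gcongr
  refine ⟨u, fun i hi => hub _ _ (hb i hi), ?_, fun i hi => ?_⟩
  · calc #{i ∈ Ico a n | u i < u (i + 1)} ≤ #{i ∈ Ico a n | b i < b (i + 1)} :=
          card_le_card <| monotone_filter_right _ fun i _ hlt => lt_of_not_ge fun hle =>
            (hub _ _ hle).not_gt hlt
      _ ≤ b n - b a := card_filter_lt_succ_le hb
      _ ≤ k - 1 := (Nat.sub_le _ _).trans cellIndex_le
  · have hmon := monotoneOn_Icc_of_le_succ hμ
    have han : a ≤ n := (mem_Icc.1 hi).1.trans (mem_Icc.1 hi).2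
    have hi' : i ∈ Set.Icc a n := mem_Icc.1 hi
    have h₀ : 0 ≤ μ i - μ a := sub_nonneg.2 (hmon (Set.left_mem_Icc.2 han) hi' hi'.1)
    have h₁ : μ i - μ a ≤ k * h :=
      (sub_le_sub_right (hmon hi' (Set.right_mem_Icc.2 han) hi'.2) _).trans hrange
    convert sq_cellMid_sub_le hh h₀ h₁ using 2
    simp only [u, b]
    ring

lemma sq_div_sq_le_max {V B k : ℝ} (hV : 0 ≤ V) (hB : 0 < B) (hk : 1 ≤ k)
    (hX : (V ^ 2 / B) ^ ((1 : ℝ) / 3) ≤ k) : V ^ 2 / k ^ 2 ≤ max ((B * V) ^ ((2 : ℝ) / 3)) B := by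
  set X := (V ^ 2 / B) ^ ((1 : ℝ) / 3) with hXdef
  have hY : 0 ≤ V ^ 2 / B := by positivity
  rcases le_or_gt 1 X with h1 | h1
  · refine le_max_of_le_left ?_
    have hX2 : X ^ 2 * (B * V) ^ ((2 : ℝ) / 3) = V ^ 2 := by
      rw [← Real.rpow_natCast, ← Real.rpow_mul hY, show (1 : ℝ) / 3 * (2 : ℕ) = 2 / 3 by norm_num,
        ← Real.mul_rpow hY (by positivity), show V ^ 2 / B * (B * V) = V ^ 3 by field_simp,
        ← Real.rpow_natCast, ← Real.rpow_mul hV]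
      norm_num
    calc V ^ 2 / k ^ 2 ≤ V ^ 2 / X ^ 2 := by gcongr
      _ = (B * V) ^ ((2 : ℝ) / 3) := by rw [← hX2]; field_simp
  · refine le_max_of_le_right ?_
    have hcube : X ^ 3 = V ^ 2 / B := by
      rw [hXdef, ← Real.rpow_natCast, ← Real.rpow_mul hY]
      norm_num
    have hlt : V ^ 2 / B < 1 := hcube ▸ pow_lt_one₀ (by positivity) h1 three_ne_zero
    calc V ^ 2 / k ^ 2 ≤ V ^ 2 := div_le_self (sq_nonneg _) (one_le_pow₀ hk)
      _ ≤ B := ((div_lt_one hB).1 hlt).le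

/-- Approximation of a nondecreasing sequence by one with at most `k*` pieces:
with `V = μ n - μ 1` and `k*` the least positive integer with
`k* ≥ (V² n / (σ² log(e n)))^{1/3}` (so `k* = 1` if this quantity is `≤ 1`),
there is a nondecreasing `ū` with at most `k* - 1` jumps such that
`(1/n) ∑ (ū_i - μ_i)² ≤ (1/4) max((σ² V log(e n)/n)^{2/3}, σ² log(e n)/n)`. -/
theorem stmt_7 (n : ℕ) (hn : 2 ≤ n) (σ : ℝ) (hσ : 0 < σ)
    (μ : ℕ → ℝ) (hmono : ∀ i ∈ Finset.Ico 1 n, μ i ≤ μ (i + 1))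
    (kstar : ℕ) (hk1 : 1 ≤ kstar)
    (hkdef : ∀ m : ℕ, 1 ≤ m →
      ((((μ n - μ 1) ^ 2 * n / (σ ^ 2 * Real.log (Real.exp 1 * n))) ^ ((1 : ℝ) / 3)
          ≤ (m : ℝ)) ↔ kstar ≤ m)) :
    ∃ u : ℕ → ℝ,
      (∀ i ∈ Finset.Ico 1 n, u i ≤ u (i + 1)) ∧
      ((Finset.Ico 1 n).filter (fun i => u i < u (i + 1))).card ≤ kstar - 1 ∧
      (1 / (n : ℝ)) * ∑ i ∈ Finset.Icc 1 n, (u i - μ i) ^ 2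
        ≤ (1 / 4) *
          max ((σ ^ 2 * (μ n - μ 1) * Real.log (Real.exp 1 * n) / n) ^ ((2 : ℝ) / 3))
            (σ ^ 2 * Real.log (Real.exp 1 * n) / n) := by
  have hn₀ : (1 : ℝ) ≤ n := by exact_mod_cast (by omega : 1 ≤ n)
  have hL : 0 < Real.log (Real.exp 1 * n) :=
    Real.log_pos (by nlinarith [Real.add_one_le_exp (1 : ℝ)])
  set L := Real.log (Real.exp 1 * n)
  set V := μ n - μ 1
  have hV : 0 ≤ V := sub_nonneg.2 <| monotoneOn_Icc_of_le_succ hmono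
    (Set.left_mem_Icc.2 (by omega)) (Set.right_mem_Icc.2 (by omega)) (by omega)
  have hk : (1 : ℝ) ≤ kstar := by exact_mod_cast hk1
  obtain ⟨u, hu_mono, hu_jumps, hu_err⟩ := exists_monotone_steps_sq_sub_le (h := V / kstar)
    (by positivity) hmono (by rw [mul_div_cancel₀ _ (by positivity)])
  refine ⟨u, hu_mono, hu_jumps, ?_⟩
  have hX : (V ^ 2 / (σ ^ 2 * L / n)) ^ ((1 : ℝ) / 3) ≤ kstar := by
    rw [div_div_eq_mul_div]
    exact (hkdef kstar hk1).2 le_rfl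
  calc 1 / (n : ℝ) * ∑ i ∈ Icc 1 n, (u i - μ i) ^ 2 ≤ (V / kstar) ^ 2 / 4 :=
        one_div_mul_sum_Icc_le (by omega) hu_err
    _ = 1 / 4 * (V ^ 2 / kstar ^ 2) := by ring
    _ ≤ 1 / 4 * max ((σ ^ 2 * V * L / n) ^ ((2 : ℝ) / 3)) (σ ^ 2 * L / n) := by
        rw [show σ ^ 2 * V * L / n = σ ^ 2 * L / n * V by ring]
        gcongr
        exact sq_div_sq_le_max hV (by positivity) hk hX
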